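/- Let G be a finitely generated group with a normal abelian subgroup N such that G/N is free abelian (of finite rank). If for all a ∈ G and b ∈ N the subgroup ⟨a, b⟩ is virtually abelian, then G is polycyclic. -/

import Mathlib

/-- A group is *virtually abelian* if it has an abelian subgroup of finite index. -/
def VirtuallyAbelian (G : Type*) [Group G] : Prop :=
  ∃ A : Subgroup G, IsMulCommutative A ∧ A.FiniteIndex

/-- A group is *polycyclic* if it has a finite subnormal series with cyclic factor groups. -/
def IsPolycyclic (G : Type*) [Group G] : Prop :=
  ∃ (n : ℕ) (σ : Fin (n + 1) → Subgroup G),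
    σ 0 = ⊥ ∧ σ (Fin.last n) = ⊤ ∧
    ∀ i : Fin n, σ i.castSucc ≤ σ i.succ ∧
      ∃ hnorm : ((σ i.castSucc).subgroupOf (σ i.succ)).Normal,
        letI := hnorm
        IsCyclic ((σ i.succ) ⧸ (σ i.castSucc).subgroupOf (σ i.succ))

/-!
Once `N` is finitely generated, `G` has a subnormal series with cyclic factors: one through a
finite generating set of the abelian group `N`, followed by the preimage of such a series of
`G ⧸ N ≅ ℤᵏ`.

To see that `N` is finitely generated, choose lifts `a₁, …, aₖ` of a basis of `ℤᵏ` and a finite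
`F ⊆ N` such that `F` and the `aᵢ` generate `G`. A subgroup `M ≤ N` that contains `F` and the
commutators `⁅aᵢ, aⱼ⁆` and is normalized by every `aᵢ` is normal, and `G ⧸ M` is generated by the
commuting images of the `aᵢ`; so `G → G ⧸ M` factors through `G ⧸ N ≅ ℤᵏ` and `M = N`. Such an
`M` is obtained from a finitely generated subgroup by closing it under conjugation by one `aᵢ` at
a time. This preserves finite generation: as `⟨a, b⟩` is virtually abelian, a power `g = aⁿ` lies
in an abelian normal subgroup of `⟨a, b⟩`, so `g² x g⁻² = (g x g⁻¹) x⁻¹ (g x g⁻¹)` and the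
conjugates `aᵐ b a⁻ᵐ` are generated by those with `0 ≤ m < 2n`. Since `G` acts on `N` through
the abelian group `G ⧸ N`, closing under one `aᵢ` keeps the invariance under the others.
-/

open Set Subgroup
open scoped commutatorElement

namespace Subgroup

variable {G : Type*} [Group G]

theorem isMulCommutative_of_le {H K : Subgroup G} (hHK : H ≤ K) [IsMulCommutative K] :
    IsMulCommutative H :=
  ⟨⟨fun x y => Subtype.ext (setLike_mul_comm (s := K) (hHK x.2) (hHK y.2))⟩⟩

def IsCyclicStep (H K : Subgroup G) : Prop :=
  H ≤ K ∧ ∃ _ : (H.subgroupOf K).Normal, IsCyclic (K ⧸ H.subgroupOf K)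

theorem IsCyclicStep.of_ker {H K : Subgroup G} {C : Type*} [Group C] [IsCyclic C]
    (hHK : H ≤ K) (ψ : K →* C) (hψ : ψ.ker = H.subgroupOf K) : IsCyclicStep H K := by
  have : (H.subgroupOf K).Normal := by rw [← hψ]; infer_instance
  let e : ψ.range ≃* K ⧸ H.subgroupOf K := (QuotientGroup.quotientKerEquivRange ψ).symm.trans
    (QuotientGroup.quotientMulEquivOfEq (M := ψ.ker) (N := H.subgroupOf K) hψ)
  exact ⟨hHK, this, isCyclic_of_surjective e e.surjective⟩

theorem IsCyclicStep.comap {G' : Type*} [Group G'] {H K : Subgroup G} (h : IsCyclicStep H K)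
    (f : G' →* G) : IsCyclicStep (H.comap f) (K.comap f) := by
  obtain ⟨hHK, _, _⟩ := h
  refine .of_ker (comap_mono hHK)
    ((QuotientGroup.mk' (H.subgroupOf K)).comp (f.subgroupComap K)) ?_
  ext x
  simp only [MonoidHom.mem_ker, MonoidHom.comp_apply, QuotientGroup.mk'_apply,
    QuotientGroup.eq_one_iff, mem_subgroupOf]
  rfl

theorem isCyclicStep_closure_insert (s : Set G) (g : G)
    [IsMulCommutative (closure (insert g s))] :
    IsCyclicStep (closure s) (closure (insert g s)) := by
  refine ⟨closure_mono (subset_insert g s), inferInstance, ?_⟩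
  set mk := QuotientGroup.mk' ((closure s).subgroupOf (closure (insert g s)))
  refine isCyclic_iff_exists_zpowers_eq_top.2 ⟨mk ⟨g, subset_closure (mem_insert g s)⟩, ?_⟩
  rw [eq_top_iff, ← MonoidHom.range_eq_top.2 (QuotientGroup.mk'_surjective _),
    MonoidHom.range_eq_map, ← closure_closure_coe_preimage, MonoidHom.map_closure, closure_le]
  rintro _ ⟨⟨x, hx⟩, hxg | hxs, rfl⟩
  · obtain rfl : x = g := hxg
    exact mem_zpowers _
  · have : mk ⟨x, hx⟩ = 1 :=
      (QuotientGroup.eq_one_iff (N := (closure s).subgroupOf _) _).2 (subset_closure hxs)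
    exact this ▸ one_mem _

theorem reflTransGen_isCyclicStep_bot_of_fg {K : Subgroup G} (hK : K.FG) [IsMulCommutative K] :
    Relation.ReflTransGen IsCyclicStep ⊥ K := by
  classical
  obtain ⟨S, hS⟩ := hK
  suffices ∀ T : Finset G, closure (T : Set G) ≤ K →
      Relation.ReflTransGen IsCyclicStep ⊥ (closure (T : Set G)) from hS ▸ this S hS.le
  intro T hT
  induction T using Finset.induction_on with
  | empty => simp [Relation.ReflTransGen.refl]
  | insert g T _ ih =>
    rw [Finset.coe_insert] at hT ⊢
    have := isMulCommutative_of_le hT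
    exact (ih ((closure_mono (subset_insert _ _)).trans hT)).tail (isCyclicStep_closure_insert _ _)

end Subgroup

theorem isPolycyclic_of_reflTransGen {G : Type*} [Group G]
    (h : Relation.ReflTransGen IsCyclicStep (⊥ : Subgroup G) ⊤) : IsPolycyclic G := by
  suffices ∀ K, Relation.ReflTransGen IsCyclicStep ⊥ K → ∃ (n : ℕ) (σ : Fin (n + 1) → Subgroup G),
      σ 0 = ⊥ ∧ σ (Fin.last n) = K ∧ ∀ i : Fin n, IsCyclicStep (σ i.castSucc) (σ i.succ) by
    obtain ⟨n, σ, h0, hn, hσ⟩ := this ⊤ h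
    exact ⟨n, σ, h0, hn, fun i => hσ i⟩
  intro K hK
  induction hK with
  | refl => exact ⟨0, fun _ => ⊥, rfl, rfl, fun i => i.elim0⟩
  | @tail L M _ hLM ih =>
    obtain ⟨n, σ, h0, hn, hσ⟩ := ih
    refine ⟨n + 1, Fin.snoc σ M, by simpa using h0, by simp, fun i => ?_⟩
    induction i using Fin.lastCases with
    | last => simpa [hn] using hLM
    | cast j =>
      rw [Fin.succ_castSucc, Fin.snoc_castSucc, Fin.snoc_castSucc]
      exact hσ j

theorem isPolycyclic_of_ker_fg {G Q : Type*} [Group G] [CommGroup Q] [Group.FG Q] (ρ : G →* Q)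
    (hfg : ρ.ker.FG) [IsMulCommutative ρ.ker] : IsPolycyclic G := by
  refine isPolycyclic_of_reflTransGen ((reflTransGen_isCyclicStep_bot_of_fg hfg).trans ?_)
  have hQ := reflTransGen_isCyclicStep_bot_of_fg (Group.fg_def.1 ‹Group.FG Q›)
  have := hQ.lift (comap ρ) fun H K h => h.comap ρ
  simpa [Function.onFun, MonoidHom.comap_bot] using this

namespace Subgroup

variable {G : Type*} [Group G]

theorem FG.map {G' : Type*} [Group G'] {H : Subgroup G} (h : H.FG) (f : G →* G') :
    (H.map f).FG := by
  classical
  obtain ⟨S, rfl⟩ := h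
  exact ⟨S.image f, by rw [Finset.coe_image, MonoidHom.map_closure]⟩

theorem conj_eq_conj_of_mul_inv_mem {N : Subgroup G} [N.Normal] [IsMulCommutative N] {u v x : G}
    (huv : u * v⁻¹ ∈ N) (hx : x ∈ N) : u * x * u⁻¹ = v * x * v⁻¹ := by
  have key := setLike_mul_comm huv (‹N.Normal›.conj_mem x hx v)
  calc u * x * u⁻¹ = (u * v⁻¹) * (v * x * v⁻¹) * (u * v⁻¹)⁻¹ := by group
    _ = v * x * v⁻¹ := by rw [key]; group

theorem conj_sq_eq_of_mem {B : Subgroup G} [B.Normal] [IsMulCommutative B] {g : G} (hg : g ∈ B)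
    (x : G) : g ^ 2 * x * (g ^ 2)⁻¹ = g * x * g⁻¹ * x⁻¹ * (g * x * g⁻¹) := by
  have key := setLike_mul_comm hg (B.mul_mem hg (‹B.Normal›.conj_mem _ (B.inv_mem hg) x))
  calc g ^ 2 * x * (g ^ 2)⁻¹ = g * (g * (x * g⁻¹ * x⁻¹)) * g⁻¹ * (g * x * g⁻¹) := by
        simp only [sq]; group
    _ = g * x * g⁻¹ * x⁻¹ * (g * x * g⁻¹) := by rw [key]; group

theorem mem_normalizer_closure_of_conj_mem {s : Set G} {g : G}
    (h₁ : ∀ x ∈ s, g * x * g⁻¹ ∈ closure s) (h₂ : ∀ x ∈ s, g⁻¹ * x * g ∈ closure s) :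
    g ∈ normalizer (closure s : Set G) := by
  rw [mem_normalizer_iff_map_conj_eq, MonoidHom.map_closure]
  refine le_antisymm ((closure_le _).2 ?_) ((closure_le _).2 fun x hx => ?_)
  · rintro _ ⟨x, hx, rfl⟩
    exact h₁ x hx
  · rw [← MonoidHom.map_closure]
    exact ⟨g⁻¹ * x * g, h₂ x hx, by simp [mul_assoc]⟩

theorem fg_closure_range_conj_zpow_of_zpow_mem {B : Subgroup G} [B.Normal] [IsMulCommutative B]
    {a : G} {n : ℤ} (hn : 0 < n) (ha : a ^ n ∈ B) (b : G) :
    (closure (range fun m : ℤ => a ^ m * b * (a ^ m)⁻¹)).FG := by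
  set c : ℤ → G := fun m => a ^ m * b * (a ^ m)⁻¹
  have hrec : ∀ m, c (m + 2 * n) = c (m + n) * (c m)⁻¹ * c (m + n) := by
    intro m
    rw [show c (m + 2 * n) = (a ^ n) ^ 2 * c m * ((a ^ n) ^ 2)⁻¹ by simp only [c]; group,
      show c (m + n) = a ^ n * c m * (a ^ n)⁻¹ by simp only [c]; group, conj_sq_eq_of_mem ha]
  set W := closure (c '' Ico 0 (2 * n))
  have hgen : ∀ m, 0 ≤ m → m < 2 * n → c m ∈ W := fun m h₀ h₁ =>
    subset_closure ⟨m, ⟨h₀, h₁⟩, rfl⟩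
  have ha : a ∈ normalizer (W : Set G) := by
    refine mem_normalizer_closure_of_conj_mem ?_ ?_ <;> rintro _ ⟨r, ⟨hr₀, hr₁⟩, rfl⟩
    · rw [show a * c r * a⁻¹ = c (r + 1) by simp only [c]; group]
      rcases (show r + 1 < 2 * n ∨ r + 1 = 0 + 2 * n by omega) with hr | hr
      · exact hgen _ (by omega) hr
      · rw [hr, hrec]
        refine mul_mem (mul_mem ?_ (inv_mem ?_)) ?_ <;> exact hgen _ (by omega) (by omega)
    · rw [show a⁻¹ * c r * a = c (r - 1) by simp only [c]; group]
      rcases (show 0 ≤ r - 1 ∨ r - 1 = -1 by omega) with hr | hr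
      · exact hgen _ hr (by omega)
      · have e : c (-1) = c (-1 + n) * (c (-1 + 2 * n))⁻¹ * c (-1 + n) := by rw [hrec]; group
        rw [hr, e]
        refine mul_mem (mul_mem ?_ (inv_mem ?_)) ?_ <;> exact hgen _ (by omega) (by omega)
  have hW : closure (range c) = W := by
    refine le_antisymm ((closure_le _).2 ?_) (closure_mono (image_subset_range _ _))
    rintro _ ⟨m, rfl⟩
    have : c m = a ^ m * c 0 * (a ^ m)⁻¹ := by simp only [c]; group
    rw [this]
    exact (mem_normalizer_iff.1 (zpow_mem ha m) _).1 (hgen 0 le_rfl (by omega))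
  rw [hW]
  exact (fg_iff _).2 ⟨_, rfl, (finite_Ico _ _).image c⟩

theorem _root_.VirtuallyAbelian.exists_zpow_mem {H : Type*} [Group H] (h : VirtuallyAbelian H)
    (a : H) : ∃ B : Subgroup H, B.Normal ∧ IsMulCommutative B ∧ ∃ n : ℤ, 0 < n ∧ a ^ n ∈ B := by
  obtain ⟨A, _, _⟩ := h
  have : A.normalCore.FiniteIndex := A.finiteIndex_normalCore
  refine ⟨A.normalCore, inferInstance, isMulCommutative_of_le A.normalCore_le, A.normalCore.index,
    by exact_mod_cast Nat.pos_of_ne_zero FiniteIndex.index_ne_zero, ?_⟩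
  exact_mod_cast A.normalCore.pow_index_mem a

theorem fg_closure_range_conj_zpow_of_virtuallyAbelian {a b : G}
    (h : VirtuallyAbelian (closure {a, b})) :
    (closure (range fun m : ℤ => a ^ m * b * (a ^ m)⁻¹)).FG := by
  obtain ⟨B, _, _, n, hn, ha⟩ := h.exists_zpow_mem ⟨a, subset_closure (by simp)⟩
  have := (fg_closure_range_conj_zpow_of_zpow_mem hn ha ⟨b, subset_closure (by simp)⟩).map
    (closure {a, b}).subtype
  rwa [MonoidHom.map_closure, ← range_comp] at this

def conjClosure (a : G) (M : Subgroup G) : Subgroup G :=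
  ⨆ m : ℤ, M.map (MulAut.conj (a ^ m))

variable {a g : G} {M N : Subgroup G}

theorem le_conjClosure : M ≤ conjClosure a M := by
  refine le_trans (le_of_eq ?_) (le_iSup _ 0)
  ext x
  simp

theorem conjClosure_le [N.Normal] (hM : M ≤ N) : conjClosure a M ≤ N :=
  iSup_le fun m => (map_mono hM).trans_eq ((normal_iff_map_conj_eq.1 ‹_›) _)

theorem conjClosure_iSup {ι : Sort*} (M : ι → Subgroup G) :
    conjClosure a (⨆ i, M i) = ⨆ i, conjClosure a (M i) := by
  simp only [conjClosure, map_iSup]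
  exact iSup_comm

theorem conjClosure_zpowers (b : G) :
    conjClosure a (zpowers b) = closure (range fun m : ℤ => a ^ m * b * (a ^ m)⁻¹) := by
  simp only [conjClosure, zpowers_eq_closure, MonoidHom.map_closure, image_singleton]
  rw [← closure_iUnion, iUnion_singleton_eq_range]
  rfl

theorem mem_normalizer_conjClosure : a ∈ normalizer (conjClosure a M : Set G) := by
  have hshift : ∀ m : ℤ, (M.map (MulAut.conj (a ^ m) : G →* G)).map (MulAut.conj a : G →* G) =
      M.map (MulAut.conj (a ^ (m + 1)) : G →* G) := by
    intro m
    rw [map_map]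
    congr 1
    ext x
    simp only [MonoidHom.coe_comp, Function.comp_apply, MonoidHom.coe_coe, MulAut.conj_apply]
    group
  rw [mem_normalizer_iff_map_conj_eq, conjClosure, map_iSup]
  simp only [hshift]
  exact (Equiv.addRight (1 : ℤ)).iSup_comp (g := fun m => M.map (MulAut.conj (a ^ m) : G →* G))

theorem mem_normalizer_conjClosure_of_mem_normalizer [N.Normal] [IsMulCommutative N]
    (hN : ∀ u v : G, ⁅u, v⁆ ∈ N) (hMN : M ≤ N) (hg : g ∈ normalizer (M : Set G)) :
    g ∈ normalizer (conjClosure a M : Set G) := by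
  have hcomm : ∀ m : ℤ, (M.map (MulAut.conj (a ^ m) : G →* G)).map (MulAut.conj g : G →* G) =
      (M.map (MulAut.conj g : G →* G)).map (MulAut.conj (a ^ m) : G →* G) := by
    intro m
    simp only [map_map]
    ext y
    simp only [mem_map, MonoidHom.coe_comp, Function.comp_apply]
    refine exists_congr fun x => and_congr_right fun hx => ?_
    have huv : g * a ^ m * (a ^ m * g)⁻¹ ∈ N := by
      simpa [commutatorElement_def, mul_assoc] using hN g (a ^ m)
    have key := conj_eq_conj_of_mul_inv_mem huv (hMN hx)
    simp only [MonoidHom.coe_coe, MulAut.conj_apply]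
    rw [show g * (a ^ m * x * (a ^ m)⁻¹) * g⁻¹ = a ^ m * (g * x * g⁻¹) * (a ^ m)⁻¹ by
      simpa [mul_assoc] using key]
  rw [mem_normalizer_iff_map_conj_eq] at hg ⊢
  rw [conjClosure, map_iSup]
  simp only [hcomm, hg]

theorem FG.conjClosure (hM : M.FG) (h : ∀ b ∈ M, VirtuallyAbelian (closure {a, b})) :
    (conjClosure a M).FG := by
  obtain ⟨S, rfl⟩ := hM
  rw [← biUnion_of_singleton (S : Set G)]
  simp only [closure_iUnion, conjClosure_iSup, ← zpowers_eq_closure, conjClosure_zpowers]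
  exact FG.biSup_finset S _ fun b hb =>
    fg_closure_range_conj_zpow_of_virtuallyAbelian (h b (subset_closure hb))

theorem exists_fg_forall_mem_normalizer {N : Subgroup G} [N.Normal] [IsMulCommutative N]
    (hN : ∀ u v : G, ⁅u, v⁆ ∈ N) (h : ∀ a : G, ∀ b ∈ N, VirtuallyAbelian (closure {a, b}))
    (s : Finset G) {M₀ : Subgroup G} (hM₀ : M₀.FG) (hM₀N : M₀ ≤ N) :
    ∃ M : Subgroup G, M₀ ≤ M ∧ M ≤ N ∧ M.FG ∧ ∀ a ∈ s, a ∈ normalizer (M : Set G) := by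
  classical
  induction s using Finset.induction_on with
  | empty => exact ⟨M₀, le_rfl, hM₀N, hM₀, by simp⟩
  | insert a s _ ih =>
    obtain ⟨M, hM₀M, hMN, hMfg, hMs⟩ := ih
    refine ⟨conjClosure a M, hM₀M.trans le_conjClosure, conjClosure_le hMN,
      hMfg.conjClosure fun b hb => h a b (hMN hb), ?_⟩
    simp only [Finset.mem_insert, forall_eq_or_imp]
    exact ⟨mem_normalizer_conjClosure,
      fun g hg => mem_normalizer_conjClosure_of_mem_normalizer hN hMN (hMs g hg)⟩

theorem closure_range_ofAdd_single_eq_top (ι : Type*) [Fintype ι] [DecidableEq ι] :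
    closure (range fun i : ι => Multiplicative.ofAdd (Pi.single i (1 : ℤ))) = ⊤ := by
  refine eq_top_iff.2 fun v _ => ?_
  have hv : v = ∏ i, Multiplicative.ofAdd (Pi.single i (1 : ℤ)) ^ v.toAdd i := by
    apply Multiplicative.toAdd.injective
    simp only [toAdd_prod, toAdd_zpow, toAdd_ofAdd]
    ext j
    simp [Finset.sum_apply, Pi.single_apply]
  rw [hv]
  exact prod_mem fun i _ => zpow_mem (subset_closure (mem_range_self i)) _

theorem exists_finite_subset_closure_union_eq_top [Group.FG G] {s : Set G} {N : Subgroup G}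
    [N.Normal] (h : closure s ⊔ N = ⊤) :
    ∃ F : Set G, F.Finite ∧ F ⊆ N ∧ closure (s ∪ F) = ⊤ := by
  obtain ⟨T, hT, hTfin⟩ := Group.fg_iff.1 ‹Group.FG G›
  choose! y hy z hz hyz using fun t (_ : t ∈ T) => mem_sup_of_normal_right.1 (h ▸ mem_top t)
  refine ⟨z '' T, hTfin.image z, image_subset_iff.2 hz, eq_top_iff.2 ?_⟩
  rw [← hT, closure_le]
  intro t ht
  rw [← hyz t ht]
  exact mul_mem (closure_mono subset_union_left (hy t ht))
    (subset_closure (Or.inr ⟨t, ht, rfl⟩))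

theorem ker_le_ker_of_closure_eq_top {ι H : Type*} [Fintype ι] [DecidableEq ι] [Group H]
    (ρ : G →* Multiplicative (ι → ℤ)) (π : G →* H) (a : ι → G)
    (ha : ∀ i, ρ (a i) = Multiplicative.ofAdd (Pi.single i 1))
    (hπa : Pairwise fun i j => Commute (π (a i)) (π (a j)))
    {F : Set G} (hFρ : F ⊆ ρ.ker) (hFπ : F ⊆ π.ker) (hgen : closure (range a ∪ F) = ⊤) :
    ρ.ker ≤ π.ker := by
  let θ : Multiplicative (ι → ℤ) →* H :=
    (MonoidHom.noncommPiCoprod (fun i => zpowersHom H (π (a i)))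
      fun _ _ hij _ _ => (hπa hij).zpow_zpow _ _).comp (MulEquiv.funMultiplicative ι ℤ).toMonoidHom
  have hθ : θ.comp ρ = π := by
    refine MonoidHom.eq_of_eqOn_dense hgen ?_
    rintro x (⟨i, rfl⟩ | hx)
    · have hsingle : MulEquiv.funMultiplicative ι ℤ (Multiplicative.ofAdd (Pi.single i 1)) =
          (Pi.mulSingle i (Multiplicative.ofAdd 1) : ι → Multiplicative ℤ) := by
        ext j
        by_cases hji : j = i
        · subst hji; simp
        · simp [hji]
      simp only [θ, MonoidHom.comp_apply, ha, MulEquiv.coe_toMonoidHom, hsingle]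
      exact (MonoidHom.noncommPiCoprod_mulSingle _ _ _).trans (by simp)
    · simp only [MonoidHom.comp_apply, MonoidHom.mem_ker.1 (hFρ hx), MonoidHom.mem_ker.1 (hFπ hx),
        map_one]
  intro x hx
  rw [MonoidHom.mem_ker, ← hθ, MonoidHom.comp_apply, hx, map_one]

theorem fg_ker_of_forall_virtuallyAbelian_closure_pair {ι : Type*} [Group.FG G] [Fintype ι]
    [DecidableEq ι] (ρ : G →* Multiplicative (ι → ℤ)) (hρ : Function.Surjective ρ)
    [IsMulCommutative ρ.ker] (h : ∀ a : G, ∀ b ∈ ρ.ker, VirtuallyAbelian (closure {a, b})) :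
    ρ.ker.FG := by
  classical
  set N := ρ.ker
  have hN : ∀ u v : G, ⁅u, v⁆ ∈ N := fun u v => by
    rw [MonoidHom.mem_ker, map_commutatorElement, commutatorElement_eq_one_iff_commute]
    exact Commute.all _ _
  choose a ha using fun i : ι => hρ (Multiplicative.ofAdd (Pi.single i 1))
  have hsup : closure (range a) ⊔ N = ⊤ := by
    rw [← comap_map_eq, MonoidHom.map_closure, ← range_comp, Function.comp_def]
    simp only [ha, closure_range_ofAdd_single_eq_top, comap_top]
  obtain ⟨F, hFfin, hFN, hgen⟩ := exists_finite_subset_closure_union_eq_top hsup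
  set M₀ := closure (F ∪ range fun p : ι × ι => ⁅a p.1, a p.2⁆)
  have hM₀fg : M₀.FG := (fg_iff _).2 ⟨_, rfl, hFfin.union (finite_range _)⟩
  have hM₀N : M₀ ≤ N := (closure_le _).2 (union_subset hFN (range_subset_iff.2 fun p => hN _ _))
  obtain ⟨M, hM₀M, hMN, hMfg, hMa⟩ :=
    exists_fg_forall_mem_normalizer hN h (Finset.univ.image a) hM₀fg hM₀N
  have : M.Normal := by
    refine normalizer_eq_top_iff.1 (eq_top_iff.2 (hgen ▸ (closure_le _).2 (union_subset ?_ ?_)))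
    · exact range_subset_iff.2 fun i => hMa _ (Finset.mem_image_of_mem a (Finset.mem_univ i))
    · exact fun x hx => le_normalizer (hM₀M (subset_closure (Or.inl hx)))
  have hNM : N ≤ M := by
    refine (ker_le_ker_of_closure_eq_top ρ (QuotientGroup.mk' M) a ha (fun i j _ => ?_) hFN
      ?_ hgen).trans (QuotientGroup.ker_mk' M).le
    · show Commute _ _
      rw [← commutatorElement_eq_one_iff_commute, ← map_commutatorElement, ← MonoidHom.mem_ker,
        QuotientGroup.ker_mk']
      exact hM₀M (subset_closure (Or.inr ⟨(i, j), rfl⟩))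
    · rw [QuotientGroup.ker_mk']
      exact fun x hx => hM₀M (subset_closure (Or.inl hx))
  exact le_antisymm hNM hMN ▸ hMfg

end Subgroup

/-- **Proposition.** Let `G` be a finitely generated group with a normal abelian subgroup `N`
such that `G/N` is free abelian of finite rank. If for all `a ∈ G` and `b ∈ N` the subgroup
`⟨a, b⟩` is virtually abelian, then `G` is polycyclic. -/
theorem polycyclic_of_two_generated_virtuallyAbelian (G : Type) [Group G] (hfg : Group.FG G)
    (N : Subgroup G) [N.Normal] (hNab : IsMulCommutative N)
    (k : ℕ) (hfree : Nonempty ((G ⧸ N) ≃* Multiplicative (Fin k → ℤ)))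
    (h : ∀ a : G, ∀ b ∈ N, VirtuallyAbelian (Subgroup.closure {a, b})) :
    IsPolycyclic G := by
  obtain ⟨e⟩ := hfree
  let ρ : G →* Multiplicative (Fin k → ℤ) := (e : G ⧸ N →* _).comp (QuotientGroup.mk' N)
  have hker : ρ.ker = N := by simp [ρ]
  have hρ : Function.Surjective ρ := e.surjective.comp (QuotientGroup.mk'_surjective N)
  rw [← hker] at hNab h
  have := hfg
  exact isPolycyclic_of_ker_fg ρ (fg_ker_of_forall_virtuallyAbelian_closure_pair ρ hρ h)
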